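/- arXiv:1802.03488 — 3 statements merged into one kernel-verified Lean document; each statement's English description precedes it below -/
import Mathlib

section
/- Let X₁, X₂ ⊆ ℝ^n be finite with C(X₁) ∩ X₂ = ∅, and let X₂ = ⋃_{j=1}^{L₂} X₂ʲ with C(X₁) ∩ C(X₂ʲ) = ∅ for each j. Suppose wⱼᵀx + bⱼ are linear classifiers with wⱼᵀx + bⱼ ≤ 0 for all x ∈ X₁ and wⱼᵀx + bⱼ > 0 for all x ∈ X₂ʲ. Let f : ℝ → ℝ be semi-positive (f(x) = 0 for x ≤ 0 and f(x) > 0 for x > 0), applied componentwise, W = [w₁,…,w_{L₂}], b = (b₁,…,b_{L₂}), and Z_k = { f(Wᵀx + b) : x ∈ X_k }. Then C(Z₁) ∩ C(Z₂) = ∅, i.e., Z₁ and Z₂ are linearly separable. -/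
/-!
Every point of `Z₁` is `0`, since all classifiers are nonpositive on `X₁` and `f` vanishes there.
Every point of `Z₂` has nonnegative coordinates, and a positive one: a point of `X₂` lies in some
`X₂ʲ`, where the `j`-th classifier is positive. So the linear functional `z ↦ ∑ⱼ zⱼ` is positive
on `C(Z₂)`, while `C(Z₁) ⊆ {0}`.
-/

open Set

section

variable {ι : Type*} [Fintype ι]

theorem convexHull_subset_sum_pos {s : Set (ι → ℝ)} (hs : ∀ z ∈ s, 0 ≤ z ∧ ∃ i, 0 < z i) :
    convexHull ℝ s ⊆ {z | 0 < ∑ i, z i} := by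
  have hsum : IsLinearMap ℝ (fun z : ι → ℝ => ∑ i, z i) :=
    ⟨fun _ _ => Finset.sum_add_distrib, fun c z => by simp [Finset.mul_sum]⟩
  refine convexHull_min (fun z hz => ?_) (convex_halfSpace_gt hsum 0)
  obtain ⟨hnonneg, i, hi⟩ := hs z hz
  exact Finset.sum_pos' (fun j _ => hnonneg j) ⟨i, Finset.mem_univ i, hi⟩

theorem disjoint_convexHull_of_subset_zero {s t : Set (ι → ℝ)} (hs : s ⊆ {0})
    (ht : ∀ z ∈ t, 0 ≤ z ∧ ∃ i, 0 < z i) :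
    Disjoint (convexHull ℝ s) (convexHull ℝ t) := by
  have hs' : convexHull ℝ s ⊆ {0} := by
    simpa only [convexHull_singleton] using convexHull_mono (𝕜 := ℝ) hs
  refine disjoint_left.mpr fun z hzs hzt => ?_
  have hz : z = 0 := hs' hzs
  simpa [hz] using convexHull_subset_sum_pos ht hzt

end

theorem stmt_2_general (n L₂ : ℕ) (X₁ X₂ : Set (Fin n → ℝ))
    (X₂p : Fin L₂ → Set (Fin n → ℝ)) (hcover : X₂ = ⋃ j, X₂p j)
    (w : Fin L₂ → (Fin n → ℝ)) (b : Fin L₂ → ℝ)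
    (hcl₁ : ∀ j, ∀ x ∈ X₁, ∑ i, w j i * x i + b j ≤ 0)
    (hcl₂ : ∀ j, ∀ x ∈ X₂p j, 0 < ∑ i, w j i * x i + b j)
    (f : ℝ → ℝ) (hf₀ : ∀ x ≤ 0, f x = 0) (hf₁ : ∀ x, 0 < x → 0 < f x)
    (Z₁ Z₂ : Set (Fin L₂ → ℝ))
    (hZ₁ : Z₁ = (fun x => fun j => f (∑ i, w j i * x i + b j)) '' X₁)
    (hZ₂ : Z₂ = (fun x => fun j => f (∑ i, w j i * x i + b j)) '' X₂) :
    Disjoint (convexHull ℝ Z₁) (convexHull ℝ Z₂) := by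
  have hf_nonneg : ∀ t, 0 ≤ f t := fun t =>
    (le_or_gt t 0).elim (fun ht => (hf₀ t ht).ge) (fun ht => (hf₁ t ht).le)
  subst hZ₁ hZ₂
  apply disjoint_convexHull_of_subset_zero
  · rintro _ ⟨x, hx, rfl⟩
    exact funext fun j => hf₀ _ (hcl₁ j x hx)
  · rintro _ ⟨x, hx, rfl⟩
    obtain ⟨j, hj⟩ := mem_iUnion.mp (hcover ▸ hx)
    exact ⟨fun k => hf_nonneg _, j, hf₁ _ (hcl₂ j x hj)⟩

theorem stmt_2 (n L₂ : ℕ) (X₁ X₂ : Set (Fin n → ℝ)) (hX₁ : X₁.Finite) (hX₂ : X₂.Finite)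
    (X₂p : Fin L₂ → Set (Fin n → ℝ)) (hcover : X₂ = ⋃ j, X₂p j)
    (hdisj : Disjoint (convexHull ℝ X₁) X₂)
    (hdisjp : ∀ j, Disjoint (convexHull ℝ X₁) (convexHull ℝ (X₂p j)))
    (w : Fin L₂ → (Fin n → ℝ)) (b : Fin L₂ → ℝ)
    (hcl₁ : ∀ j, ∀ x ∈ X₁, ∑ i, w j i * x i + b j ≤ 0)
    (hcl₂ : ∀ j, ∀ x ∈ X₂p j, 0 < ∑ i, w j i * x i + b j)
    (f : ℝ → ℝ) (hf₀ : ∀ x ≤ 0, f x = 0) (hf₁ : ∀ x, 0 < x → 0 < f x)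
    (Z₁ Z₂ : Set (Fin L₂ → ℝ))
    (hZ₁ : Z₁ = (fun x => fun j => f (∑ i, w j i * x i + b j)) '' X₁)
    (hZ₂ : Z₂ = (fun x => fun j => f (∑ i, w j i * x i + b j)) '' X₂) :
    Disjoint (convexHull ℝ Z₁) (convexHull ℝ Z₂) :=
  stmt_2_general n L₂ X₁ X₂ X₂p hcover w b hcl₁ hcl₂ f hf₀ hf₁ Z₁ Z₂ hZ₁ hZ₂
end

section
/- Let X₁, X₂ ⊆ ℝ^n be finite with disjoint convex hull decompositions X₁ = ⋃_{i=1}^{L₁} X₁ⁱ, X₂ = ⋃_{j=1}^{L₂} X₂ʲ where C(X₁ⁱ) ∩ C(X₂ʲ) = ∅ for all i, j. Suppose for all i, j there are classifiers with w_{ij}ᵀx + b_{ij} ≤ 0 on X₁ⁱ and > 0 on X₂ʲ. Let f be semi-positive applied componentwise, W the concatenation of all w_{ij}, b of all b_{ij}, and Z_k = { f(Wᵀx + b) : x ∈ X_k }. Then Z₁ ∩ C(Z₂) = ∅, i.e., Z₁ and Z₂ are convexly separable. -/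
open Set

/-!
Fix a point `x` of `X₁ⁱ`. Every classifier `(i, j)` puts `x` on its non-positive side, so the
coordinates `(i, ·)` of its image vanish. A point `y` of `X₂ʲ` lies on the positive side of
classifier `(i, j)`, and `f ≥ 0`, so the coordinates `(i, ·)` of its image have positive sum.
Hence the linear functional `v ↦ ∑ⱼ v (i, j)` is `0` at the image of `x` and positive on `Z₂`,
so on its convex hull as well.
-/

lemma notMem_convexHull_of_le_of_forall_lt {E : Type*} [AddCommGroup E] [Module ℝ E]
    {t : Set E} {x : E} (φ : E →ₗ[ℝ] ℝ) {c : ℝ} (hx : φ x ≤ c) (ht : ∀ y ∈ t, c < φ y) :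
    x ∉ convexHull ℝ t := fun hxt =>
  hx.not_gt (convexHull_min ht (convex_halfSpace_gt φ.isLinear c) hxt)

section SemiPositive

variable {f : ℝ → ℝ} {κ : Type*} [Fintype κ] {a : κ → ℝ}

lemma nonneg_of_semipositive (hf₀ : ∀ x ≤ 0, f x = 0) (hf₁ : ∀ x, 0 < x → 0 < f x) (x : ℝ) :
    0 ≤ f x := by
  rcases le_or_gt x 0 with h | h
  · exact (hf₀ x h).ge
  · exact (hf₁ x h).le

lemma sum_comp_eq_zero_of_nonpos (hf₀ : ∀ x ≤ 0, f x = 0) (ha : ∀ j, a j ≤ 0) :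
    ∑ j, f (a j) = 0 :=
  Finset.sum_eq_zero fun j _ => hf₀ _ (ha j)

lemma sum_comp_pos_of_exists_pos (hf₀ : ∀ x ≤ 0, f x = 0) (hf₁ : ∀ x, 0 < x → 0 < f x)
    (ha : ∃ j, 0 < a j) : 0 < ∑ j, f (a j) := by
  obtain ⟨j, hj⟩ := ha
  exact Finset.sum_pos' (fun _ _ => nonneg_of_semipositive hf₀ hf₁ _)
    ⟨j, Finset.mem_univ _, hf₁ _ hj⟩

end SemiPositive

theorem stmt_5_general (n L₁ L₂ : ℕ) (X₁ X₂ : Set (Fin n → ℝ))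
    (X₁p : Fin L₁ → Set (Fin n → ℝ)) (X₂p : Fin L₂ → Set (Fin n → ℝ))
    (hcover₁ : X₁ = ⋃ i, X₁p i) (hcover₂ : X₂ = ⋃ j, X₂p j)
    (w : Fin L₁ → Fin L₂ → (Fin n → ℝ)) (b : Fin L₁ → Fin L₂ → ℝ)
    (hcl₁ : ∀ i j, ∀ x ∈ X₁p i, ∑ k, w i j k * x k + b i j ≤ 0)
    (hcl₂ : ∀ i j, ∀ x ∈ X₂p j, 0 < ∑ k, w i j k * x k + b i j)
    (f : ℝ → ℝ) (hf₀ : ∀ x ≤ 0, f x = 0) (hf₁ : ∀ x, 0 < x → 0 < f x)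
    (Z₁ Z₂ : Set (Fin L₁ × Fin L₂ → ℝ))
    (hZ₁ : Z₁ = (fun x => fun p => f (∑ k, w p.1 p.2 k * x k + b p.1 p.2)) '' X₁)
    (hZ₂ : Z₂ = (fun x => fun p => f (∑ k, w p.1 p.2 k * x k + b p.1 p.2)) '' X₂) :
    Disjoint Z₁ (convexHull ℝ Z₂) := by
  rw [disjoint_left, hZ₁, hZ₂]
  rintro _ ⟨x, hx, rfl⟩
  obtain ⟨i, hxi⟩ := mem_iUnion.mp (hcover₁ ▸ hx)
  refine notMem_convexHull_of_le_of_forall_lt (∑ j, LinearMap.proj (i, j)) (c := 0) ?_ ?_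
  · simp only [LinearMap.sum_apply, LinearMap.proj_apply]
    exact (sum_comp_eq_zero_of_nonpos hf₀ fun j => hcl₁ i j x hxi).le
  · rintro _ ⟨y, hy, rfl⟩
    obtain ⟨j, hyj⟩ := mem_iUnion.mp (hcover₂ ▸ hy)
    simp only [LinearMap.sum_apply, LinearMap.proj_apply]
    exact sum_comp_pos_of_exists_pos hf₀ hf₁ ⟨j, hcl₂ i j y hyj⟩

theorem stmt_5 (n L₁ L₂ : ℕ) (X₁ X₂ : Set (Fin n → ℝ)) (hX₁ : X₁.Finite) (hX₂ : X₂.Finite)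
    (X₁p : Fin L₁ → Set (Fin n → ℝ)) (X₂p : Fin L₂ → Set (Fin n → ℝ))
    (hcover₁ : X₁ = ⋃ i, X₁p i) (hcover₂ : X₂ = ⋃ j, X₂p j)
    (hdisjp : ∀ i j, Disjoint (convexHull ℝ (X₁p i)) (convexHull ℝ (X₂p j)))
    (w : Fin L₁ → Fin L₂ → (Fin n → ℝ)) (b : Fin L₁ → Fin L₂ → ℝ)
    (hcl₁ : ∀ i j, ∀ x ∈ X₁p i, ∑ k, w i j k * x k + b i j ≤ 0)
    (hcl₂ : ∀ i j, ∀ x ∈ X₂p j, 0 < ∑ k, w i j k * x k + b i j)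
    (f : ℝ → ℝ) (hf₀ : ∀ x ≤ 0, f x = 0) (hf₁ : ∀ x, 0 < x → 0 < f x)
    (Z₁ Z₂ : Set (Fin L₁ × Fin L₂ → ℝ))
    (hZ₁ : Z₁ = (fun x => fun p => f (∑ k, w p.1 p.2 k * x k + b p.1 p.2)) '' X₁)
    (hZ₂ : Z₂ = (fun x => fun p => f (∑ k, w p.1 p.2 k * x k + b p.1 p.2)) '' X₂) :
    Disjoint Z₁ (convexHull ℝ Z₂) :=
  stmt_5_general n L₁ L₂ X₁ X₂ X₁p X₂p hcover₁ hcover₂ w b hcl₁ hcl₂ f hf₀ hf₁ Z₁ Z₂ hZ₁ hZ₂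
end

section
/- Let f(x) = c₁x for x ≤ 0 and f(x) = c₂x for x ≥ 0 with 0 < c₁ < c₂ (a leaky ReLU). For fixed δ > 0 and D > 0, the infimum over x₀ ∈ ℝ of the quantity (f(x₀) − f(x₀ − D)) / (f(x₀ + δ) − f(x₀ − D)) is attained at x₀ = 0, where it equals c₁D / (c₂δ + c₁D). -/
/-!
The leaky ReLU has all its difference quotients between `c₁` and `c₂`. Writing the ratio as
`a / (a + b)` with `a = f x₀ - f (x₀ - D) ≥ c₁ D` and `0 ≤ b = f (x₀ + δ) - f x₀ ≤ c₂ δ`, it is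
increasing in `a` and decreasing in `b`, so it is at least `c₁ D / (c₁ D + c₂ δ)`; at `x₀ = 0`
both bounds are equalities.
-/

open Set

lemma div_add_le_div_add {a a' b b' : ℝ} (ha' : 0 < a') (ha : a' ≤ a) (hb : 0 ≤ b)
    (hb' : b ≤ b') : a' / (a' + b') ≤ a / (a + b) := by
  rw [div_le_div_iff₀ (by linarith) (by linarith)]
  nlinarith

section SlopeBounds

variable {g : ℝ → ℝ} {m M : ℝ}

lemma le_div_sub_of_slope_bounds (hm : 0 < m)
    (hlow : ∀ u v, u ≤ v → m * (v - u) ≤ g v - g u)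
    (hup : ∀ u v, u ≤ v → g v - g u ≤ M * (v - u))
    {δ D : ℝ} (hδ : 0 < δ) (hD : 0 < D) (x : ℝ) :
    m * D / (M * δ + m * D) ≤ (g x - g (x - D)) / (g (x + δ) - g (x - D)) := by
  have hA : m * D ≤ g x - g (x - D) := by simpa using hlow (x - D) x (by linarith)
  have hB : 0 ≤ g (x + δ) - g x := by
    nlinarith [hlow x (x + δ) (by linarith)]
  have hB' : g (x + δ) - g x ≤ M * δ := by simpa using hup x (x + δ) (by linarith)
  have key := div_add_le_div_add (mul_pos hm hD) hA hB hB'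
  rwa [add_comm (m * D), sub_add_sub_cancel'] at key

end SlopeBounds

section LeakyRelu

variable {c₁ c₂ : ℝ} {f : ℝ → ℝ} (hf : ∀ x, f x = if x ≤ 0 then c₁ * x else c₂ * x)
include hf

lemma leakyRelu_slope_ge (hc : c₁ ≤ c₂) {u v : ℝ} (huv : u ≤ v) :
    c₁ * (v - u) ≤ f v - f u := by
  rw [hf, hf]
  split_ifs <;> nlinarith

lemma leakyRelu_slope_le (hc : c₁ ≤ c₂) {u v : ℝ} (huv : u ≤ v) :
    f v - f u ≤ c₂ * (v - u) := by
  rw [hf, hf]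
  split_ifs <;> nlinarith

lemma leakyRelu_ratio_at_zero {δ D : ℝ} (hδ : 0 < δ) (hD : 0 < D) :
    (f 0 - f (0 - D)) / (f (0 + δ) - f (0 - D)) = c₁ * D / (c₂ * δ + c₁ * D) := by
  rw [hf, hf, hf, if_pos le_rfl, if_pos (by linarith), if_neg (by linarith)]
  ring_nf

end LeakyRelu

theorem stmt_7 (c₁ c₂ δ D : ℝ) (hc₁ : 0 < c₁) (hc : c₁ < c₂) (hδ : 0 < δ) (hD : 0 < D)
    (f : ℝ → ℝ) (hf : ∀ x, f x = if x ≤ 0 then c₁ * x else c₂ * x) :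
    (∀ x₀ : ℝ, (f 0 - f (0 - D)) / (f (0 + δ) - f (0 - D)) ≤
        (f x₀ - f (x₀ - D)) / (f (x₀ + δ) - f (x₀ - D))) ∧
      (f 0 - f (0 - D)) / (f (0 + δ) - f (0 - D)) = c₁ * D / (c₂ * δ + c₁ * D) := by
  have hval := leakyRelu_ratio_at_zero hf hδ hD
  refine ⟨fun x₀ => ?_, hval⟩
  rw [hval]
  exact le_div_sub_of_slope_bounds hc₁ (fun _ _ => leakyRelu_slope_ge hf hc.le)
    (fun _ _ => leakyRelu_slope_le hf hc.le) hδ hD x₀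
end
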